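/- Let f : [0,1] → ℂ be C¹ with ∫₀¹|f|² = 1 and let p_k denote the purity of the reduced density matrix of the first k qubits of the N → ∞ binary-grid encoding of f. Then lim_{k→∞} 4^k·(1 − p_k) = g₁(f)/6, where g₁(f) = ∫₀¹|f'|² − (∫₀¹ f'·conj f)(∫₀¹ f·conj f'). -/

import Mathlib

/-!
The matrix `ρ_k` is the Gram matrix of the restrictions of `f` to the `2^k` cells of the dyadic
grid, all translated to the cell `[0, h]`, `h = 2⁻ᵏ`. As `tr ρ_k = ‖f‖² = 1`, the defect
`1 - tr ρ_k² = (tr ρ_k)² - tr ρ_k²` is the sum over pairs of cells of the `2 × 2` Gram determinants,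
and by Lagrange's identity each of them is `½ ∫∫_{[0,h]²} |f(a+s) f(b+t) - f(a+t) f(b+s)|²`.
Uniformly in the cells, the integrand is `(t - s)² |f(a) f'(b) - f(b) f'(a)|² + o(h²)`, so the pair
contributes `h⁴/12 · |f(a) f'(b) - f(b) f'(a)|² + o(h⁴)`. After multiplying by `4^k` and summing
over pairs, the discrete Lagrange identity turns the main terms into one sixth of Riemann sums for
`(∫|f|²)(∫|f'|²) - |∫ f f̄'|²`, which is `g₁(f)`.
-/

open intervalIntegral Matrix Filter Topology Set ComplexConjugate

theorem IsCompact.exists_forall_dist_lt {α β : Type*} [PseudoMetricSpace α] [PseudoMetricSpace β]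
    {K : Set α} (hK : IsCompact K) {g : α → β} (hg : Continuous g) {ε : ℝ} (hε : 0 < ε) :
    ∃ δ > 0, ∀ x ∈ K, ∀ y, dist x y < δ → dist (g x) (g y) < ε := by
  obtain ⟨δ, hδ, hsub⟩ := Metric.mem_uniformity_dist.1 <|
    hK.uniformContinuousAt_of_continuousAt g (fun x _ => hg.continuousAt)
      (Metric.dist_mem_uniformity hε)
  exact ⟨δ, hδ, fun x hx y hxy => hsub hxy hx⟩

theorem Complex.abs_normSq_sub_normSq_le (z w : ℂ) :
    |Complex.normSq z - Complex.normSq w| ≤ (‖z‖ + ‖w‖) * ‖z - w‖ := by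
  rw [← Complex.sq_norm, ← Complex.sq_norm, sq_sub_sq, abs_mul, abs_of_nonneg (by positivity)]
  exact mul_le_mul_of_nonneg_left (abs_norm_sub_norm_le z w) (by positivity)

theorem Complex.abs_normSq_sub_sq_mul_normSq_le {z w : ℂ} {r B η : ℝ} (hw : ‖w‖ ≤ B)
    (hz : ‖z - r * w‖ ≤ η * |r|) :
    |Complex.normSq z - r ^ 2 * Complex.normSq w| ≤ (2 * B + η) * η * r ^ 2 := by
  have hrw : ‖(r : ℂ) * w‖ ≤ B * |r| := by
    rw [norm_mul, Complex.norm_real, Real.norm_eq_abs, mul_comm]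
    exact mul_le_mul_of_nonneg_right hw (abs_nonneg r)
  have hzn : ‖z‖ ≤ B * |r| + η * |r| := (norm_le_norm_add_norm_sub' z _).trans (add_le_add hrw hz)
  rw [show r ^ 2 * Complex.normSq w = Complex.normSq (r * w) by
    rw [Complex.normSq_mul, Complex.normSq_ofReal, sq]]
  calc _ ≤ (‖z‖ + ‖(r : ℂ) * w‖) * ‖z - r * w‖ := Complex.abs_normSq_sub_normSq_le _ _
    _ ≤ ((B * |r| + η * |r|) + B * |r|) * (η * |r|) :=
      mul_le_mul (add_le_add hzn hrw) hz (norm_nonneg _)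
        (by linarith [norm_nonneg z, norm_nonneg ((r : ℂ) * w)])
    _ = (2 * B + η) * η * r ^ 2 := by rw [← sq_abs r]; ring

theorem Complex.ofReal_normSq_mul_sub_mul (x₁ y₁ x₂ y₂ : ℂ) :
    (Complex.normSq (x₁ * y₂ - x₂ * y₁) : ℂ) =
      x₁ * conj x₁ * (y₂ * conj y₂) + y₁ * conj y₁ * (x₂ * conj x₂)
        - x₁ * conj y₁ * (y₂ * conj x₂) - y₁ * conj x₁ * (x₂ * conj y₂) := by
  rw [← mul_conj]
  simp only [map_sub, map_mul]
  ring

theorem lagrange_identity_sum {ι : Type*} [Fintype ι] (x y : ι → ℂ) :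
    ((∑ i, ∑ j, Complex.normSq (x i * y j - x j * y i) : ℝ) : ℂ) =
      2 * ((∑ i, x i * conj (x i)) * (∑ i, y i * conj (y i))
        - (∑ i, x i * conj (y i)) * (∑ i, y i * conj (x i))) := by
  push_cast
  simp only [Complex.ofReal_normSq_mul_sub_mul, Finset.sum_add_distrib, Finset.sum_sub_distrib,
    ← Finset.sum_mul_sum]
  ring

theorem lagrange_identity_intervalIntegral {x y : ℝ → ℂ} (hx : Continuous x) (hy : Continuous y)
    (a b : ℝ) :
    ((∫ s in a..b, ∫ t in a..b, Complex.normSq (x s * y t - x t * y s) : ℝ) : ℂ) =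
      2 * ((∫ s in a..b, x s * conj (x s)) * (∫ s in a..b, y s * conj (y s))
        - (∫ s in a..b, x s * conj (y s)) * (∫ s in a..b, y s * conj (x s))) := by
  simp only [← integral_ofReal, Complex.ofReal_normSq_mul_sub_mul]
  simp (disch := apply Continuous.intervalIntegrable; fun_prop) only
    [integral_add, integral_sub, integral_const_mul, integral_mul_const]
  ring

theorem Matrix.trace_sq_sub_trace_mul_self {n R : Type*} [Fintype n] [CommRing R]
    (A : Matrix n n R) :
    A.trace ^ 2 - (A * A).trace = ∑ i, ∑ j, (A i i * A j j - A i j * A j i) := by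
  simp only [trace, diag, mul_apply, sq, Finset.sum_mul_sum, Finset.sum_sub_distrib]

theorem Fin.cast_div_mem_Icc {n : ℕ} (j : Fin n) : (j / n : ℝ) ∈ Icc (0:ℝ) 1 :=
  ⟨by positivity, div_le_one_of_le₀ (by exact_mod_cast j.isLt.le) (Nat.cast_nonneg n)⟩

theorem sum_intervalIntegral_grid {E : Type*} [NormedAddCommGroup E] [NormedSpace ℝ E]
    {φ : ℝ → E} (hφ : Continuous φ) {n : ℕ} (hn : n ≠ 0) :
    ∑ j : Fin n, ∫ x in (j / n : ℝ)..(j + 1) / n, φ x = ∫ x in (0:ℝ)..1, φ x := by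
  have h := sum_integral_adjacent_intervals (a := fun j : ℕ => (j / n : ℝ)) (n := n)
    (μ := MeasureTheory.volume) (fun _ _ => hφ.intervalIntegrable _ _)
  simp only [Nat.cast_add, Nat.cast_one, Nat.cast_zero, zero_div,
    div_self (Nat.cast_ne_zero.2 hn : (n : ℝ) ≠ 0)] at h
  rw [Fin.sum_univ_eq_sum_range (fun j : ℕ => ∫ x in (j / n : ℝ)..(j + 1) / n, φ x), h]

theorem tendsto_riemannSum_intervalIntegral {E : Type*} [NormedAddCommGroup E] [NormedSpace ℝ E]
    [CompleteSpace E] {φ : ℝ → E} (hφ : Continuous φ) :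
    Tendsto (fun n : ℕ => (n : ℝ)⁻¹ • ∑ j : Fin n, φ (j / n)) atTop
      (𝓝 (∫ x in (0:ℝ)..1, φ x)) := by
  refine Metric.tendsto_nhds.2 fun ε hε => ?_
  obtain ⟨δ, hδ, hφδ⟩ := (isCompact_Icc (a := 0) (b := 1)).exists_forall_dist_lt hφ (half_pos hε)
  filter_upwards [(tendsto_inv_atTop_nhds_zero_nat (𝕜 := ℝ)).eventually (gt_mem_nhds hδ),
    eventually_gt_atTop 0] with n hnδ hn
  have hn : (0:ℝ) < n := Nat.cast_pos.2 hn
  have hcell (j : Fin n) :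
      ‖(∫ x in (j / n : ℝ)..(j + 1) / n, φ x) - (n : ℝ)⁻¹ • φ (j / n)‖ ≤ ε / 2 * (n : ℝ)⁻¹ := by
    have hlen : ((j + 1) / n - j / n : ℝ) = (n : ℝ)⁻¹ := by field_simp; ring
    rw [← hlen, ← integral_const, ← integral_sub (hφ.intervalIntegrable _ _)
      intervalIntegrable_const]
    refine (norm_integral_le_of_norm_le_const fun x hx => ?_).trans_eq
      (by rw [hlen, abs_of_pos (inv_pos.2 hn)])
    rw [uIoc_of_le (by gcongr; linarith)] at hx
    rw [← dist_eq_norm, dist_comm]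
    refine (hφδ _ j.cast_div_mem_Icc x ?_).le
    rw [Real.dist_eq, abs_sub_comm, abs_of_nonneg (by linarith [hx.1])]
    linarith [hx.2]
  calc dist ((n : ℝ)⁻¹ • ∑ j : Fin n, φ (j / n)) (∫ x in (0:ℝ)..1, φ x)
      = ‖∑ j : Fin n, ((∫ x in (j / n : ℝ)..(j + 1) / n, φ x) - (n : ℝ)⁻¹ • φ (j / n))‖ := by
        rw [dist_comm, dist_eq_norm, Finset.sum_sub_distrib, Finset.smul_sum,
          sum_intervalIntegral_grid hφ (by exact_mod_cast hn.ne')]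
    _ ≤ ∑ _j : Fin n, ε / 2 * (n : ℝ)⁻¹ :=
        (norm_sum_le _ _).trans (Finset.sum_le_sum fun j _ => hcell j)
    _ < ε := by
        rw [Finset.sum_const, Finset.card_univ, Fintype.card_fin, nsmul_eq_mul]
        field_simp
        linarith

theorem integral_integral_sub_sq (h : ℝ) :
    ∫ s in (0:ℝ)..h, ∫ t in (0:ℝ)..h, (t - s) ^ 2 = h ^ 4 / 6 := by
  have hinner (s : ℝ) : ∫ t in (0:ℝ)..h, (t - s) ^ 2 = ((h - s) ^ 3 + s ^ 3) / 3 := by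
    norm_num [integral_comp_sub_right (fun x : ℝ => x ^ 2), Odd.neg_pow (by decide : Odd 3)]
  simp only [hinner, integral_div]
  rw [integral_add (Continuous.intervalIntegrable (by fun_prop) _ _)
    (Continuous.intervalIntegrable (by fun_prop) _ _),
    integral_comp_sub_left (fun x : ℝ => x ^ 3)]
  norm_num
  ring

theorem abs_integral_integral_sub_le {F G : ℝ → ℝ → ℝ} (hF : Continuous (Function.uncurry F))
    (hG : Continuous (Function.uncurry G)) {h η : ℝ} (hh : 0 ≤ h)
    (hFG : ∀ s ∈ Icc 0 h, ∀ t ∈ Icc 0 h, |F s t - G s t| ≤ η) :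
    |(∫ s in (0:ℝ)..h, ∫ t in (0:ℝ)..h, F s t) - ∫ s in (0:ℝ)..h, ∫ t in (0:ℝ)..h, G s t|
      ≤ η * h ^ 2 := by
  have hIoc : uIoc (0:ℝ) h ⊆ Icc 0 h := by rw [uIoc_of_le hh]; exact Ioc_subset_Icc_self
  have hinner (s : ℝ) (hs : s ∈ Icc 0 h) :
      ‖(∫ t in (0:ℝ)..h, F s t) - ∫ t in (0:ℝ)..h, G s t‖ ≤ η * h := by
    rw [← integral_sub ((hF.uncurry_left s).intervalIntegrable _ _)
      ((hG.uncurry_left s).intervalIntegrable _ _)]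
    simpa [abs_of_nonneg hh] using norm_integral_le_of_norm_le_const
      (f := fun t => F s t - G s t) fun t ht => hFG s hs t (hIoc ht)
  rw [← Real.norm_eq_abs, ← integral_sub
    ((continuous_parametric_intervalIntegral_of_continuous' hF 0 h).intervalIntegrable _ _)
    ((continuous_parametric_intervalIntegral_of_continuous' hG 0 h).intervalIntegrable _ _)]
  simpa [abs_of_nonneg hh, sq, mul_assoc] using
    norm_integral_le_of_norm_le_const fun s hs => hinner s (hIoc hs)

/-- `reducedDensity f (2 ^ k)` is the paper's `ρ_k`: its entry `(j, j')` is the kernel at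
`u = j / 2^k`, `u' = j' / 2^k`, written after the substitution `w = v / 2^k`. -/
noncomputable def reducedDensity (f : ℝ → ℂ) (n : ℕ) : Matrix (Fin n) (Fin n) ℂ :=
  of fun j j' => ∫ w in (0:ℝ)..(n : ℝ)⁻¹, f (j / n + w) * conj (f (j' / n + w))

noncomputable def wedgeSqIntegral (f : ℝ → ℂ) (a b h : ℝ) : ℝ :=
  ∫ s in (0:ℝ)..h, ∫ t in (0:ℝ)..h, Complex.normSq (f (a + s) * f (b + t) - f (a + t) * f (b + s))

noncomputable def gramDet (x y : ℝ → ℂ) : ℂ :=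
  (∫ u in (0:ℝ)..1, x u * conj (x u)) * (∫ u in (0:ℝ)..1, y u * conj (y u))
    - (∫ u in (0:ℝ)..1, x u * conj (y u)) * (∫ u in (0:ℝ)..1, y u * conj (x u))

section Purity

variable {f : ℝ → ℂ}

theorem reducedDensity_apply {n : ℕ} (hn : n ≠ 0) (j j' : Fin n) :
    reducedDensity f n j j' =
      ((1 / n : ℝ) : ℂ) * ∫ v in (0:ℝ)..1, f (j / n + v / n) * conj (f (j' / n + v / n)) := by
  have hn' : (n : ℝ) ≠ 0 := Nat.cast_ne_zero.2 hn
  rw [integral_comp_div (fun w => f (j / n + w) * conj (f (j' / n + w))) hn', zero_div,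
    Complex.real_smul, ← mul_assoc, ← Complex.ofReal_mul, one_div_mul_cancel hn',
    Complex.ofReal_one, one_mul, one_div]
  rfl

theorem trace_reducedDensity (hf : Continuous f) {n : ℕ} (hn : n ≠ 0) :
    (reducedDensity f n).trace = ∫ u in (0:ℝ)..1, f u * conj (f u) := by
  rw [← sum_intervalIntegral_grid (by fun_prop) hn]
  refine Finset.sum_congr rfl fun j _ => ?_
  simp only [Matrix.diag_apply, reducedDensity, of_apply]
  rw [integral_comp_add_left (fun u => f u * conj (f u)), add_zero, add_div, one_div]

theorem trace_sq_sub_trace_mul_self_reducedDensity (hf : Continuous f) (n : ℕ) :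
    (reducedDensity f n).trace ^ 2 - (reducedDensity f n * reducedDensity f n).trace =
      ((∑ j : Fin n, ∑ j' : Fin n, wedgeSqIntegral f (j / n) (j' / n) (n : ℝ)⁻¹ / 2 : ℝ) : ℂ) := by
  rw [trace_sq_sub_trace_mul_self]
  push_cast
  refine Finset.sum_congr rfl fun j _ => Finset.sum_congr rfl fun j' _ => ?_
  unfold wedgeSqIntegral
  rw [lagrange_identity_intervalIntegral (x := fun s => f (j / n + s))
    (y := fun s => f (j' / n + s)) (by fun_prop) (by fun_prop)]
  simp only [reducedDensity, of_apply]
  ring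

theorem exists_norm_wedge_sub_le (hf : ContDiff ℝ 1 f) {ε : ℝ} (hε : 0 < ε) :
    ∃ δ > 0, ∀ a ∈ Icc (0:ℝ) 1, ∀ b ∈ Icc (0:ℝ) 1, ∀ s ∈ Icc (0:ℝ) δ, ∀ t ∈ Icc (0:ℝ) δ,
      ‖f (a + s) * f (b + t) - f (a + t) * f (b + s)
        - (t - s : ℝ) * (f a * deriv f b - f b * deriv f a)‖ ≤ ε * |t - s| := by
  have hf' : Continuous (deriv f) := hf.continuous_deriv le_rfl
  obtain ⟨δ, hδ, hP⟩ := (isCompact_Icc.prod isCompact_Icc).exists_forall_dist_lt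
    (g := fun p : ℝ × ℝ => f p.1 * deriv f p.2) (by fun_prop) (half_pos hε)
  refine ⟨δ / 2, half_pos hδ, fun a ha b hb s hs t ht => ?_⟩
  have hclose (x y τ : ℝ) (hx : x ∈ Icc (0:ℝ) 1) (hy : y ∈ Icc (0:ℝ) 1) (hτ : τ ∈ uIcc s t) :
      ‖f (x + s) * deriv f (y + τ) - f x * deriv f y‖ ≤ ε / 2 := by
    have hτ' := uIcc_subset_Icc hs ht hτ
    rw [← dist_eq_norm, dist_comm]
    refine (hP (x, y) ⟨hx, hy⟩ (x + s, y + τ) ?_).le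
    rw [Prod.dist_eq, Real.dist_eq, Real.dist_eq, sub_add_cancel_left, sub_add_cancel_left,
      abs_neg, abs_neg, abs_of_nonneg hs.1, abs_of_nonneg hτ'.1]
    exact max_lt (by linarith [hs.2]) (by linarith [hτ'.2])
  have hftc (c : ℝ) : ∫ τ in s..t, deriv f (c + τ) = f (c + t) - f (c + s) := by
    rw [integral_comp_add_left (deriv f), integral_deriv_eq_sub
      (fun x _ => hf.differentiable one_ne_zero x) (hf'.intervalIntegrable _ _)]
  have hrepr : f (a + s) * f (b + t) - f (a + t) * f (b + s)
        - (t - s : ℝ) * (f a * deriv f b - f b * deriv f a) =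
      ∫ τ in s..t, ((f (a + s) * deriv f (b + τ) - f a * deriv f b)
        - (f (b + s) * deriv f (a + τ) - f b * deriv f a)) := by
    simp (disch := apply Continuous.intervalIntegrable; fun_prop) only
      [integral_sub, integral_const_mul, integral_const, hftc, Complex.real_smul]
    ring
  rw [hrepr]
  refine norm_integral_le_of_norm_le_const (C := ε) fun τ hτ => ?_
  exact (norm_sub_le _ _).trans (add_le_add (hclose a b τ ha hb (uIoc_subset_uIcc hτ))
    (hclose b a τ hb ha (uIoc_subset_uIcc hτ))) |>.trans_eq (add_halves ε)

theorem exists_abs_wedgeSqIntegral_sub_le (hf : ContDiff ℝ 1 f) {ε : ℝ} (hε : 0 < ε) :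
    ∃ δ > 0, ∀ h ∈ Icc (0:ℝ) δ, ∀ a ∈ Icc (0:ℝ) 1, ∀ b ∈ Icc (0:ℝ) 1,
      |wedgeSqIntegral f a b h - h ^ 4 / 6 * Complex.normSq (f a * deriv f b - f b * deriv f a)|
        ≤ ε * h ^ 4 := by
  have hf' : Continuous (deriv f) := hf.continuous_deriv le_rfl
  have hfc : Continuous f := hf.continuous
  obtain ⟨B, hB⟩ := (isCompact_Icc.prod isCompact_Icc).exists_bound_of_continuousOn
    (f := fun p : ℝ × ℝ => f p.1 * deriv f p.2 - f p.2 * deriv f p.1) (by fun_prop)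
  set η := min 1 (ε / (2 * |B| + 1))
  have hη : 0 < η := lt_min one_pos (by positivity)
  have hηε : (2 * |B| + η) * η ≤ ε := by
    calc (2 * |B| + η) * η ≤ (2 * |B| + 1) * η := by gcongr; exact min_le_left _ _
      _ ≤ ε := (le_div_iff₀' (by positivity)).1 (min_le_right _ _)
  obtain ⟨δ, hδ, hW⟩ := exists_norm_wedge_sub_le hf hη
  refine ⟨δ, hδ, fun h hh a ha b hb => ?_⟩
  set G := f a * deriv f b - f b * deriv f a
  have hG : ‖G‖ ≤ |B| := (hB (a, b) ⟨ha, hb⟩).trans (le_abs_self B)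
  have hpt : ∀ s ∈ Icc 0 h, ∀ t ∈ Icc 0 h,
      |Complex.normSq (f (a + s) * f (b + t) - f (a + t) * f (b + s))
        - (t - s) ^ 2 * Complex.normSq G| ≤ ε * h ^ 2 := by
    intro s hs t ht
    have hd : (t - s) ^ 2 ≤ h ^ 2 := sq_le_sq' (by linarith [hs.2, ht.1]) (by linarith [hs.1, ht.2])
    refine (Complex.abs_normSq_sub_sq_mul_normSq_le hG
      (hW a ha b hb s (Icc_subset_Icc_right hh.2 hs) t (Icc_subset_Icc_right hh.2 ht))).trans ?_
    gcongr
  have hint := abs_integral_integral_sub_le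
    (F := fun s t => Complex.normSq (f (a + s) * f (b + t) - f (a + t) * f (b + s)))
    (G := fun s t => (t - s) ^ 2 * Complex.normSq G) (by fun_prop) (by fun_prop) hh.1 hpt
  simp only [integral_mul_const, integral_integral_sub_sq] at hint
  exact hint.trans_eq (by ring)

theorem tendsto_wedgeSqIntegral_sub_riemannSum (hf : ContDiff ℝ 1 f) :
    Tendsto (fun n : ℕ =>
      (n : ℝ) ^ 2 * ∑ j : Fin n, ∑ j' : Fin n, wedgeSqIntegral f (j / n) (j' / n) (n : ℝ)⁻¹ / 2
        - ((n : ℝ) ^ 2)⁻¹ / 12 * ∑ j : Fin n, ∑ j' : Fin n,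
          Complex.normSq (f (j / n) * deriv f (j' / n) - f (j' / n) * deriv f (j / n)))
      atTop (𝓝 0) := by
  refine Metric.tendsto_nhds.2 fun ε hε => ?_
  obtain ⟨δ, hδ, hD⟩ := exists_abs_wedgeSqIntegral_sub_le hf hε
  filter_upwards [(tendsto_inv_atTop_nhds_zero_nat (𝕜 := ℝ)).eventually (gt_mem_nhds hδ),
    eventually_gt_atTop 0] with n hnδ hn
  have hn : (0:ℝ) < n := Nat.cast_pos.2 hn
  have hpair (j j' : Fin n) :
      |(n : ℝ) ^ 2 * (wedgeSqIntegral f (j / n) (j' / n) (n : ℝ)⁻¹ / 2)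
        - ((n : ℝ) ^ 2)⁻¹ / 12 *
          Complex.normSq (f (j / n) * deriv f (j' / n) - f (j' / n) * deriv f (j / n))|
        ≤ ε / 2 / n ^ 2 := by
    have hpos : (0:ℝ) < n ^ 2 / 2 := by positivity
    calc _ = (n : ℝ) ^ 2 / 2 * |wedgeSqIntegral f (j / n) (j' / n) (n : ℝ)⁻¹
          - (n : ℝ)⁻¹ ^ 4 / 6 *
            Complex.normSq (f (j / n) * deriv f (j' / n) - f (j' / n) * deriv f (j / n))| := by
          rw [← abs_of_pos hpos, ← abs_mul]
          congr 1
          field_simp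
          ring
      _ ≤ (n : ℝ) ^ 2 / 2 * (ε * (n : ℝ)⁻¹ ^ 4) := by
          gcongr
          exact hD _ ⟨by positivity, hnδ.le⟩ _ j.cast_div_mem_Icc _ j'.cast_div_mem_Icc
      _ = ε / 2 / n ^ 2 := by field_simp
  rw [Real.dist_eq, sub_zero]
  simp_rw [Finset.mul_sum, ← Finset.sum_sub_distrib]
  calc _ ≤ ∑ _j : Fin n, ∑ _j' : Fin n, ε / 2 / n ^ 2 :=
        (Finset.abs_sum_le_sum_abs _ _).trans <| Finset.sum_le_sum fun j _ =>
          (Finset.abs_sum_le_sum_abs _ _).trans <| Finset.sum_le_sum fun j' _ => hpair j j'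
    _ = ε / 2 := by simp; field_simp
    _ < ε := half_lt_self hε

theorem tendsto_riemannSum_wedge (hf : ContDiff ℝ 1 f) :
    Tendsto (fun n : ℕ => ((((n : ℝ) ^ 2)⁻¹ / 12 * ∑ j : Fin n, ∑ j' : Fin n,
          Complex.normSq (f (j / n) * deriv f (j' / n) - f (j' / n) * deriv f (j / n)) : ℝ) : ℂ))
      atTop (𝓝 (gramDet f (deriv f) / 6)) := by
  have hf' : Continuous (deriv f) := hf.continuous_deriv le_rfl
  have hfc : Continuous f := hf.continuous
  have hR (x y : ℝ → ℂ) (hx : Continuous x) (hy : Continuous y) :=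
    tendsto_riemannSum_intervalIntegral (φ := fun u => x u * conj (y u)) (by fun_prop)
  refine ((((hR f f hfc hfc).mul (hR _ _ hf' hf')).sub
    ((hR _ _ hfc hf').mul (hR _ _ hf' hfc))).div_const 6).congr fun n => ?_
  rw [Complex.ofReal_mul, lagrange_identity_sum (fun j : Fin n => f (j / n))
    (fun j : Fin n => deriv f (j / n))]
  simp only [Complex.real_smul]
  push_cast
  ring

theorem tendsto_sq_mul_trace_sq_sub_trace_mul_self_reducedDensity (hf : ContDiff ℝ 1 f) :
    Tendsto (fun n : ℕ => (n : ℂ) ^ 2 *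
        ((reducedDensity f n).trace ^ 2 - (reducedDensity f n * reducedDensity f n).trace))
      atTop (𝓝 (gramDet f (deriv f) / 6)) := by
  have h := ((Complex.continuous_ofReal.tendsto 0).comp
    (tendsto_wedgeSqIntegral_sub_riemannSum hf)).add (tendsto_riemannSum_wedge hf)
  rw [Complex.ofReal_zero, zero_add] at h
  refine h.congr fun n => ?_
  rw [trace_sq_sub_trace_mul_self_reducedDensity hf.continuous, Function.comp_apply,
    ← Complex.ofReal_add, sub_add_cancel]
  push_cast
  rfl

end Purity

/-- Theorem 1 (limit form): for a C¹, L²-normalized `f : [0,1] → ℂ`, the purity `p_k` of the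
reduced density matrix of the first `k` qubits of the (N → ∞) binary-grid encoding,
given by the kernel `ρ_k(u,u') = (1/2^k)∫₀¹ f(u+v/2^k)·conj(f(u'+v/2^k)) dv` on the `2^k`
grid points, satisfies `lim_{k→∞} 4^k (1 − p_k) = g₁(f)/6`. -/
theorem purity_limit (f : ℝ → ℂ) (hf : ContDiff ℝ 1 f)
    (hnorm : ∫ u in (0:ℝ)..1, Complex.normSq (f u) = 1)
    (ρ : ∀ k : ℕ, Matrix (Fin (2 ^ k)) (Fin (2 ^ k)) ℂ)
    (hρ : ∀ k (j j' : Fin (2 ^ k)), ρ k j j' =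
      (1 / 2 ^ k : ℝ) * ∫ v in (0:ℝ)..1,
        f ((j : ℝ) / 2 ^ k + v / 2 ^ k) * (starRingEnd ℂ) (f ((j' : ℝ) / 2 ^ k + v / 2 ^ k)))
    (p : ℕ → ℝ)
    (hp : ∀ k, p k = ((ρ k * ρ k).trace).re)
    (g1 : ℂ)
    (hg1 : g1 = (∫ u in (0:ℝ)..1, Complex.normSq (deriv f u) : ℝ)
        - (∫ u in (0:ℝ)..1, deriv f u * (starRingEnd ℂ) (f u))
          * (∫ u in (0:ℝ)..1, f u * (starRingEnd ℂ) (deriv f u))) :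
    Filter.Tendsto (fun k : ℕ => (4:ℝ) ^ k * (1 - p k)) Filter.atTop (nhds (g1.re / 6)) := by
  have hρ_eq (k : ℕ) : ρ k = reducedDensity f (2 ^ k) := Matrix.ext fun j j' => by
    rw [hρ, reducedDensity_apply (by positivity)]
    push_cast
    rfl
  have hnorm' : ∫ u in (0:ℝ)..1, f u * conj (f u) = 1 := by
    simp_rw [Complex.mul_conj, integral_ofReal, hnorm, Complex.ofReal_one]
  have hg1' : gramDet f (deriv f) = g1 := by
    simp_rw [gramDet, hnorm', Complex.mul_conj (deriv f _), integral_ofReal, hg1]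
    ring
  have h := (Complex.continuous_re.tendsto _).comp
    ((tendsto_sq_mul_trace_sq_sub_trace_mul_self_reducedDensity hf).comp
      (tendsto_pow_atTop_atTop_of_one_lt one_lt_two))
  rw [hg1', Complex.div_ofNat_re] at h
  refine h.congr fun k => ?_
  have h4 : ((2 ^ k : ℕ) : ℂ) ^ 2 = ((4 ^ k : ℝ) : ℂ) := by
    push_cast
    rw [← pow_mul, mul_comm, pow_mul]
    norm_num
  rw [Function.comp_apply, Function.comp_apply, ← hρ_eq, h4, Complex.re_ofReal_mul, hp, hρ_eq,
    trace_reducedDensity hf.continuous (by positivity), hnorm', one_pow, Complex.sub_re,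
    Complex.one_re]
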